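/- arXiv:1811.02388 — 3 statements merged into one kernel-verified Lean document; each statement's English description precedes it below -/
import Mathlib

section
/- Let F be a field, n ≥ 1 and ω ≥ 1 integers with ω - 1 ≤ n, and let b_1, …, b_{ω-1} ∈ F^n be linearly independent column vectors. If k ∈ F^{n-1} satisfies k ∉ ⟨b_1', …, b_{ω-1}'⟩, then the vectors b_1(k), …, b_{ω-1}(k) ∈ F^{n-1} are linearly independent. -/
/-- The vector consisting of the first `n - 1` components of `v`. -/
def projv {F : Type*} [Field F] {n : ℕ} (v : Fin n → F) : Fin (n - 1) → F :=
  fun i => v (Fin.castLE (Nat.sub_le n 1) i)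

/-- The last component of `v`. -/
def lastc {F : Type*} [Field F] {n : ℕ} (hn : 0 < n) (v : Fin n → F) : F :=
  v ⟨n - 1, Nat.sub_lt hn Nat.one_pos⟩

/-- The compressed vector `v(k) = v' + v_n • k`, i.e. `[I_{n-1} k] · v`. -/
def cvec {F : Type*} [Field F] {n : ℕ} (hn : 0 < n) (k : Fin (n - 1) → F)
    (v : Fin n → F) : Fin (n - 1) → F :=
  fun i => projv v i + lastc hn v * k i

/-- The set `K_A` of forbidden compression vectors: all
`Σ αᵢ bᵢ' + Σ βₑ fₑ'` over coefficient tuples `(α, β)` with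
`Σ αᵢ b_{i,n} + Σ βₑ f_{e,n} = -1`. -/
def KSet {F : Type*} [Field F] {n : ℕ} {ι κ : Type*} [Fintype ι] [Fintype κ]
    (hn : 0 < n) (b : ι → Fin n → F) (f : κ → Fin n → F) : Set (Fin (n - 1) → F) :=
  { x | ∃ (α : ι → F) (β : κ → F),
      ((∑ i, α i * lastc hn (b i)) + ∑ e, β e * lastc hn (f e) = -1) ∧
      x = (∑ i, α i • projv (b i)) + ∑ e, β e • projv (f e) }

/-
The map `v ↦ v(k)` is injective on `⟨bᵢ⟩`: if `v(k) = v' + v_n k = 0` with `v_n ≠ 0`, then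
`k = -v_n⁻¹ v'` lies in `⟨bᵢ'⟩`; hence `v_n = 0`, so also `v' = 0`, i.e. `v = 0`.
-/

theorem LinearIndependent.add_smul_of_notMem_span {K M N ι : Type*} [Field K]
    [AddCommGroup M] [Module K M] [AddCommGroup N] [Module K N]
    (f : M →ₗ[K] N) (g : M →ₗ[K] K) (hfg : ∀ v, f v = 0 → g v = 0 → v = 0)
    {b : ι → M} (hb : LinearIndependent K b) {k : N}
    (hk : k ∉ Submodule.span K (Set.range fun i => f (b i))) :
    LinearIndependent K fun i => f (b i) + g (b i) • k := by
  refine hb.map (f := f + g.smulRight k) ?_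
  rw [Submodule.disjoint_def]
  intro v hv hker
  have hsum : f v + g v • k = 0 := hker
  have hfv : f v ∈ Submodule.span K (Set.range fun i => f (b i)) := by
    rw [Set.range_comp' f b, ← Submodule.map_span]
    exact Submodule.mem_map_of_mem hv
  have hgv : g v = 0 := by
    by_contra hne
    apply hk
    rw [← inv_smul_smul₀ hne k, eq_neg_of_add_eq_zero_right hsum]
    exact Submodule.smul_mem _ _ (Submodule.neg_mem _ hfv)
  exact hfg v (by simpa [hgv] using hsum) hgv

section Compression

variable {F : Type*} [Field F] {n : ℕ}

def projvₗ : (Fin n → F) →ₗ[F] Fin (n - 1) → F :=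
  LinearMap.funLeft F F (Fin.castLE (Nat.sub_le n 1))

def lastcₗ (hn : 0 < n) : (Fin n → F) →ₗ[F] F :=
  LinearMap.proj ⟨n - 1, Nat.sub_lt hn Nat.one_pos⟩

@[simp]
theorem projvₗ_apply (v : Fin n → F) : projvₗ v = projv v :=
  rfl

@[simp]
theorem lastcₗ_apply (hn : 0 < n) (v : Fin n → F) : lastcₗ hn v = lastc hn v :=
  rfl

theorem eq_zero_of_projv_eq_zero_of_lastc_eq_zero (hn : 0 < n) {v : Fin n → F}
    (hproj : projv v = 0) (hlast : lastc hn v = 0) : v = 0 := by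
  ext j
  rcases lt_or_ge (j : ℕ) (n - 1) with hj | hj
  · exact congrFun hproj ⟨j, hj⟩
  · obtain rfl : j = ⟨n - 1, Nat.sub_lt hn Nat.one_pos⟩ := Fin.ext (show (j : ℕ) = n - 1 by omega)
    exact hlast

theorem cvec_eq_projv_add_smul (hn : 0 < n) (k : Fin (n - 1) → F) (v : Fin n → F) :
    cvec hn k v = projv v + lastc hn v • k :=
  rfl

theorem LinearIndependent.compress {ι : Type*} (hn : 0 < n) {b : ι → Fin n → F}
    (hb : LinearIndependent F b) {k : Fin (n - 1) → F}
    (hk : k ∉ Submodule.span F (Set.range fun i => projv (b i))) :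
    LinearIndependent F fun i => cvec hn k (b i) := by
  have key := hb.add_smul_of_notMem_span (projvₗ (F := F)) (lastcₗ hn)
    (by simpa using fun _ => eq_zero_of_projv_eq_zero_of_lastc_eq_zero hn) (by simpa using hk)
  simpa only [cvec_eq_projv_add_smul, projvₗ_apply, lastcₗ_apply] using key

end Compression

/-- First part of the proof of Lemma 1: if `b₁, …, b_{ω-1} ∈ Fⁿ` are linearly
independent and `k ∈ F^{n-1}` avoids the span of the projections `bᵢ'`, then the
compressed vectors `bᵢ(k)` are linearly independent. -/
theorem compressed_linearIndependent (F : Type*) [Field F] (n ω : ℕ)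
    (hn : 1 ≤ n)
    (b : Fin (ω - 1) → Fin n → F) (hb : LinearIndependent F b)
    (k : Fin (n - 1) → F)
    (hk : k ∉ Submodule.span F (Set.range fun i => projv (b i))) :
    LinearIndependent F (fun i => cvec (by omega : 0 < n) k (b i)) :=
  hb.compress (by omega) hk
end

section
/- Let F be a field, ω ≥ 1 and r ≥ 0 integers with n = ω + r. Let b_1, …, b_{ω-1} ∈ F^n and f_e ∈ F^n (e ∈ A, |A| = r) be vectors such that the n-1 projected vectors b_1', …, b_{ω-1}', f_e' (e ∈ A) are linearly independent in F^{n-1}. Then for every k ∈ F^{n-1} with k ∉ K_A, the n-1 vectors b_1(k), …, b_{ω-1}(k), f_e(k) (e ∈ A) are linearly independent in F^{n-1}. -/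
/-! If `Σ gᵢ (pᵢ + ℓᵢ k) = 0` and `c = Σ gᵢ ℓᵢ`, then `Σ gᵢ pᵢ = -c k`. For `c = 0` independence of
the `pᵢ` forces `g = 0`; for `c ≠ 0` the coefficients `-gᵢ / c` exhibit `k` as a combination
`Σ aᵢ pᵢ` with `Σ aᵢ ℓᵢ = -1`, which is exactly what `k ∉ K_A` excludes. -/

theorem LinearIndependent.add_smul_of_forall_ne {F V ι : Type*} [Field F] [AddCommGroup V]
    [Module F V] [Fintype ι] {p : ι → V} (hp : LinearIndependent F p) {ℓ : ι → F} {k : V}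
    (hk : ∀ a : ι → F, ∑ i, a i * ℓ i = -1 → ∑ i, a i • p i ≠ k) :
    LinearIndependent F fun i => p i + ℓ i • k := by
  rw [Fintype.linearIndependent_iff] at hp ⊢
  intro g hg
  set c := ∑ i, g i * ℓ i
  have hsum : ∑ i, g i • p i + c • k = 0 := by
    simpa only [smul_add, smul_smul, Finset.sum_add_distrib, ← Finset.sum_smul] using hg
  by_cases hc : c = 0
  · exact hp g (by simpa only [hc, zero_smul, add_zero] using hsum)
  · refine absurd ?_ (hk (fun i => -(g i / c)) ?_)
    · calc ∑ i, -(g i / c) • p i = -c⁻¹ • ∑ i, g i • p i := by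
            simp only [Finset.smul_sum, smul_smul, div_eq_inv_mul, neg_mul]
        _ = k := by
            rw [eq_neg_of_add_eq_zero_left hsum, smul_neg, smul_smul, neg_mul,
              inv_mul_cancel₀ hc, neg_smul, one_smul, neg_neg]
    · calc ∑ i, -(g i / c) * ℓ i = -(c / c) := by
            simp only [neg_mul, Finset.sum_neg_distrib, div_mul_eq_mul_div, ← Finset.sum_div]
            rfl
        _ = -1 := by rw [div_self hc]

theorem sum_ne_of_notMem_KSet {F : Type*} [Field F] {n : ℕ} {ι κ : Type*} [Fintype ι]
    [Fintype κ] {hn : 0 < n} {b : ι → Fin n → F} {f : κ → Fin n → F} {k : Fin (n - 1) → F}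
    (hk : k ∉ KSet hn b f) (a : ι ⊕ κ → F)
    (ha : ∑ x, a x * lastc hn (Sum.elim b f x) = -1) :
    ∑ x, a x • projv (Sum.elim b f x) ≠ k := by
  rintro rfl
  simp only [Fintype.sum_sum_type, Sum.elim_inl, Sum.elim_inr] at ha hk
  exact hk ⟨fun i => a (.inl i), fun e => a (.inr e), ha, rfl⟩

/-- Strong per-wiretap-set form proved inside Lemma 2: if the `n - 1` projected
vectors `b₁', …, b_{ω-1}', f_e' (e ∈ A)` are linearly independent, then for every
`k ∉ K_A` the `n - 1` compressed vectors `b₁(k), …, b_{ω-1}(k), f_e(k) (e ∈ A)`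
are linearly independent. -/
theorem compressed_family_linearIndependent (F : Type*) [Field F] (ω r : ℕ)
    (hω : 1 ≤ ω) (b : Fin (ω - 1) → Fin (ω + r) → F) (f : Fin r → Fin (ω + r) → F)
    (hind : LinearIndependent F
      (Sum.elim (fun i => projv (b i)) (fun e => projv (f e))))
    (k : Fin (ω + r - 1) → F) (hk : k ∉ KSet (by omega : 0 < ω + r) b f) :
    LinearIndependent F
      (Sum.elim (fun i => cvec (by omega : 0 < ω + r) k (b i))
        (fun e => cvec (by omega : 0 < ω + r) k (f e))) := by
  have hproj : LinearIndependent F fun x => projv (Sum.elim b f x) := by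
    convert hind using 1
    ext (x | x) <;> rfl
  have hn : 0 < ω + r := by omega
  have hcvec : Sum.elim (fun i => cvec hn k (b i)) (fun e => cvec hn k (f e)) =
      fun x => projv (Sum.elim b f x) + lastc hn (Sum.elim b f x) • k := by
    ext (x | x) <;> rfl
  rw [hcvec]
  exact hproj.add_smul_of_forall_ne (sum_ne_of_notMem_KSet hk)
end

section
/- Let F_q be a finite field of order q, let n, ω, r be nonnegative integers with ω ≥ 1 and n = ω + r, and let L_1, …, L_N be subspaces of F_q^n, each of dimension at most r. If q > N, then there exist linearly independent vectors b_1, …, b_ω ∈ F_q^n such that ⟨b_1, …, b_ω⟩ ∩ L_j = {0} for all j = 1, …, N. -/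
/-!
Over a field with `q` elements, a proper subspace has index at least `q`, so by Neumann's
coset-cover bound (the reciprocal indices of a covering by subgroups sum to at least `1`)
fewer than `q` proper subspaces cannot cover the space. Choose the `bᵢ` greedily: if
`W = ⟨b₁, …, b_{i-1}⟩` meets every `L_j` trivially and `i ≤ ω`, the subspaces `W + L_j` are
proper by dimension count, and any `bᵢ` avoiding all of them keeps the family independent and
the enlarged span still meets every `L_j` trivially, by modularity of the subspace lattice.
-/

open Module Submodule Set
open scoped Pointwise

section DivisionRing

variable {k V ι : Type*} [DivisionRing k] [AddCommGroup V] [Module k V]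

theorem Submodule.ne_top_of_finrank_lt {p : Submodule k V} (hp : finrank k p < finrank k V) :
    p ≠ ⊤ := by
  rintro rfl
  exact hp.ne (finrank_top k V)

variable [Finite k]

theorem Submodule.inv_index_le_inv_card {p : Submodule k V} (hp : p ≠ ⊤) :
    (p.toAddSubgroup.index : ℚ)⁻¹ ≤ (Nat.card k : ℚ)⁻¹ := by
  have hindex : p.toAddSubgroup.index = Nat.card (V ⧸ p) := AddSubgroup.index_eq_card _
  rcases eq_or_ne (Nat.card (V ⧸ p)) 0 with h | h
  · simp [hindex, h]
  have : Finite (V ⧸ p) := Nat.finite_of_card_ne_zero h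
  have : Nontrivial (V ⧸ p) := Quotient.nontrivial_iff.mpr hp
  obtain ⟨y, hy⟩ := exists_ne (0 : V ⧸ p)
  have hcard : Nat.card k ≤ Nat.card (V ⧸ p) :=
    Nat.card_le_card_of_injective _ (smul_left_injective k hy)
  rw [hindex]
  exact inv_anti₀ (by exact_mod_cast Nat.card_pos) (by exact_mod_cast hcard)

variable [Fintype ι]

theorem Submodule.exists_forall_notMem_of_card_lt
    {p : ι → Submodule k V} (hp : ∀ i, p i ≠ ⊤) (hcard : Fintype.card ι < Nat.card k) :
    ∃ x, ∀ i, x ∉ p i := by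
  by_contra! hcover
  have hcovers : ⋃ i ∈ Finset.univ, (0 : V) +ᵥ ((p i).toAddSubgroup : Set V) = univ := by
    simpa [eq_univ_iff_forall] using hcover
  have hk : (0 : ℚ) < Nat.card k := by exact_mod_cast Nat.card_pos
  have hlt : (1 : ℚ) < 1 := calc
    1 ≤ ∑ i, ((p i).toAddSubgroup.index : ℚ)⁻¹ :=
      AddSubgroup.one_le_sum_inv_index_of_leftCoset_cover hcovers
    _ ≤ ∑ _i : ι, (Nat.card k : ℚ)⁻¹ := Finset.sum_le_sum fun i _ => inv_index_le_inv_card (hp i)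
    _ = Fintype.card ι / Nat.card k := by simp [div_eq_mul_inv]
    _ < 1 := (div_lt_one hk).mpr (by exact_mod_cast hcard)
  exact hlt.false

theorem Submodule.exists_notMem_forall_notMem_sup {W : Submodule k V} (hW : W ≠ ⊤)
    {L : ι → Submodule k V} (hWL : ∀ j, W ⊔ L j ≠ ⊤) (hcard : Fintype.card ι < Nat.card k) :
    ∃ x, x ∉ W ∧ ∀ j, x ∉ W ⊔ L j := by
  cases isEmpty_or_nonempty ι with
  | inl _ =>
    obtain ⟨x, -, hx⟩ := SetLike.exists_of_lt hW.lt_top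
    exact ⟨x, hx, isEmptyElim⟩
  | inr hι =>
    obtain ⟨x, hx⟩ := exists_forall_notMem_of_card_lt hWL hcard
    exact ⟨x, fun hxW => hx hι.some (mem_sup_left hxW), hx⟩

theorem exists_linearIndependent_forall_disjoint [FiniteDimensional k V] (L : ι → Submodule k V)
    (hcard : Fintype.card ι < Nat.card k) {m : ℕ} (hm : m ≤ finrank k V)
    (hL : ∀ j, m + finrank k (L j) ≤ finrank k V) :
    ∃ b : Fin m → V, LinearIndependent k b ∧ ∀ j, Disjoint (span k (range b)) (L j) := by
  induction m with
  | zero => exact ⟨Fin.elim0, linearIndependent_empty_type, by simp⟩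
  | succ m ih =>
    obtain ⟨b, hb, hdisj⟩ := ih (by omega) fun j => by have := hL j; omega
    set W := span k (range b)
    have hW : finrank k W = m := by rw [finrank_span_eq_card hb, Fintype.card_fin]
    have hWL j : W ⊔ L j ≠ ⊤ := ne_top_of_finrank_lt <| by
      have := finrank_add_le_finrank_add_finrank W (L j)
      have := hL j
      omega
    obtain ⟨x, hxW, hxWL⟩ :=
      exists_notMem_forall_notMem_sup (ne_top_of_finrank_lt (by omega)) hWL hcard
    refine ⟨Fin.cons x b, hb.finCons hxW, fun j => ?_⟩
    rw [Fin.range_cons, span_insert]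
    exact (hdisj j).disjoint_sup_left_of_disjoint_sup_right
      (disjoint_span_singleton_of_notMem (hxWL j)).symm

end DivisionRing

theorem exists_secure_basis_general (F : Type*) [Field F] [Fintype F]
    (n ω r N : ℕ) (hn : n = ω + r)
    (L : Fin N → Submodule F (Fin n → F))
    (hL : ∀ j, Module.finrank F ↥(L j) ≤ r)
    (hq : N < Fintype.card F) :
    ∃ b : Fin ω → Fin n → F, LinearIndependent F b ∧
      ∀ j, Submodule.span F (Set.range b) ⊓ L j = ⊥ := by
  have hdim : finrank F (Fin n → F) = ω + r := by rw [finrank_fin_fun, hn]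
  obtain ⟨b, hb, hdisj⟩ := exists_linearIndependent_forall_disjoint L
    (by rwa [Fintype.card_fin, Nat.card_eq_fintype_card]) (m := ω) (by omega)
    fun j => by have := hL j; omega
  exact ⟨b, hb, fun j => (hdisj j).eq_bot⟩

/-- Existence result underlying the Cai–Yeung secure code construction: if
`q > N` and `L₁, …, L_N` are subspaces of `F_qⁿ` of dimension at most `r`
(where `n = ω + r`, `ω ≥ 1`), then there exist linearly independent vectors
`b₁, …, b_ω` whose span intersects each `L_j` trivially. -/
theorem exists_secure_basis (F : Type*) [Field F] [Fintype F]
    (n ω r N : ℕ) (hω : 1 ≤ ω) (hn : n = ω + r)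
    (L : Fin N → Submodule F (Fin n → F))
    (hL : ∀ j, Module.finrank F ↥(L j) ≤ r)
    (hq : N < Fintype.card F) :
    ∃ b : Fin ω → Fin n → F, LinearIndependent F b ∧
      ∀ j, Submodule.span F (Set.range b) ⊓ L j = ⊥ :=
  exists_secure_basis_general F n ω r N hn L hL hq
end
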